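/- For all natural numbers n, m, every real number a, and every natural number k with k < min(n, m), the linearization coefficient of the Bessel polynomials vanishes: β_k^{(n,m)}(a) = 0. -/

import Mathlib

open Finset

/-- The Bessel polynomial `q_n`, normalized so that `q_n(0) = 1`. -/
noncomputable def besselQ (n : ℕ) (u : ℝ) : ℝ :=
  ∑ k ∈ Finset.range (n + 1),
    ((n.factorial : ℝ) * (2 * n - k).factorial * 2 ^ k) /
      ((2 * n).factorial * (n - k).factorial * k.factorial) * u ^ k

/-- The Pochhammer symbol `(x)_j = x (x+1) ⋯ (x+j-1)`. -/
noncomputable def poch (x : ℝ) (j : ℕ) : ℝ := ∏ i ∈ Finset.range j, (x + i)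

/-- Generalized binomial coefficient with integer (possibly negative) upper entry. -/
noncomputable def gbinom (z : ℤ) (j : ℕ) : ℝ :=
  (∏ i ∈ Finset.range j, ((z : ℝ) - i)) / j.factorial

/-!
Multiply the identity by `e^{-u}` and compare the coefficients of odd powers `u^{2j+1}`.
The coefficient of `u^s` in `e^{-u} q_k(u)` is `(-1)^{s+k} ∏_{i<k} (s - 2i - 1) / ((2k-1)!! s!)`:
both sides satisfy, in `k`, the recurrence `q_{k+2} = q_{k+1} + u² q_k / ((2k+1)(2k+3))`.
So the first nonzero odd coefficient of `e^{-u} q_k(u)` is that of `u^{2k+1}`.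
Since `e^{-u} = e^{-au} e^{-(1-a)u}`, the left side becomes the product of
`e^{-au} q_n(au)` and `e^{-(1-a)u} q_m((1-a)u)`, and every term of an odd coefficient of a
product involves an odd coefficient of one factor; hence its coefficients of `u^{2j+1}`,
`j < min n m`, vanish. On the right these coefficients form a triangular system in the `β_j`
with nonzero diagonal.
-/

open Polynomial
open scoped Nat

theorem eq_zero_of_sum_mul_triangular {R : Type*} [Semiring R] [NoZeroDivisors R]
    (c : ℕ → ℕ → R) (β : ℕ → R) {M N : ℕ} (hMN : M ≤ N)
    (hc : ∀ i j, j < i → c i j = 0) (hdiag : ∀ j < M, c j j ≠ 0)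
    (h : ∀ j < M, ∑ i ∈ Finset.range N, β i * c i j = 0) :
    ∀ k < M, β k = 0 := by
  intro k
  induction k using Nat.strong_induction_on with
  | _ k ih =>
    intro hk
    have hsum := h k hk
    rw [Finset.sum_eq_single_of_mem k (Finset.mem_range.mpr (by omega))] at hsum
    · exact (mul_eq_zero.mp hsum).resolve_right (hdiag k hk)
    · intro i _ hik
      rcases hik.lt_or_gt with hlt | hgt
      · rw [ih i hlt (hlt.trans hk), zero_mul]
      · rw [hc i k hgt, mul_zero]

theorem PowerSeries.coeff_odd_mul_eq_zero {R : Type*} [CommSemiring R] {f g : PowerSeries R}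
    {n m : ℕ} (hf : ∀ j < n, coeff (2 * j + 1) f = 0) (hg : ∀ j < m, coeff (2 * j + 1) g = 0)
    {j : ℕ} (hj : j < min n m) : coeff (2 * j + 1) (f * g) = 0 := by
  rw [coeff_mul]
  refine Finset.sum_eq_zero fun ⟨p, q⟩ hpq => ?_
  rw [Finset.HasAntidiagonal.mem_antidiagonal] at hpq
  obtain ⟨t, rfl | rfl⟩ := Nat.even_or_odd' p
  · obtain rfl : q = 2 * (j - t) + 1 := by omega
    rw [hg _ (by omega), mul_zero]
  · rw [hf t (by omega), zero_mul]

theorem Polynomial.coe_comp_C_mul_X {R : Type*} [CommSemiring R] (p : R[X]) (r : R) :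
    ((p.comp (C r * X) : R[X]) : PowerSeries R) = PowerSeries.rescale r (p : PowerSeries R) := by
  ext s
  rw [PowerSeries.coeff_rescale, coeff_coe, coeff_coe, comp_C_mul_X_coeff, mul_comm]

noncomputable def besselCoeff (k j : ℕ) : ℝ :=
  2 ^ j * k.descFactorial j / (j ! * (2 * k).descFactorial j)

noncomputable def besselPoly (k : ℕ) : ℝ[X] :=
  ∑ j ∈ Finset.range (k + 1), C (besselCoeff k j) * X ^ j

theorem besselCoeff_of_lt {k j : ℕ} (h : k < j) : besselCoeff k j = 0 := by
  simp [besselCoeff, Nat.descFactorial_eq_zero_iff_lt.mpr h]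

theorem besselCoeff_zero_right (k : ℕ) : besselCoeff k 0 = 1 := by
  simp [besselCoeff]

theorem besselCoeff_one_right (k : ℕ) : besselCoeff (k + 1) 1 = 1 := by
  simp only [besselCoeff, Nat.descFactorial_one, pow_one, Nat.factorial_one]
  push_cast
  field_simp

theorem coeff_besselPoly (k j : ℕ) : (besselPoly k).coeff j = besselCoeff k j := by
  simp only [besselPoly, finsetSum_coeff, coeff_C_mul_X_pow]
  rcases le_or_gt j k with h | h
  · rw [Finset.sum_ite_eq]; simp [Nat.lt_succ_of_le h]
  · rw [besselCoeff_of_lt h, Finset.sum_ite_eq]; simp [h.not_ge]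

theorem besselCoeff_eq {k j : ℕ} (hj : j ≤ k) :
    besselCoeff k j = (k ! * (2 * k - j)! * 2 ^ j : ℝ) / ((2 * k)! * (k - j)! * j !) := by
  have hk : ((k - j)! * k.descFactorial j : ℝ) = k ! := by
    exact_mod_cast Nat.factorial_mul_descFactorial hj
  have h2k : ((2 * k - j)! * (2 * k).descFactorial j : ℝ) = (2 * k)! := by
    exact_mod_cast Nat.factorial_mul_descFactorial (by omega : j ≤ 2 * k)
  have hdesc : ((2 * k).descFactorial j : ℝ) ≠ 0 := by
    exact_mod_cast (Nat.descFactorial_pos.mpr (by omega)).ne'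
  rw [besselCoeff, ← hk, ← h2k]
  field_simp

theorem eval_besselPoly (k : ℕ) (u : ℝ) : (besselPoly k).eval u = besselQ k u := by
  simp only [besselPoly, besselQ, eval_finsetSum, eval_mul, eval_C, eval_pow, eval_X]
  refine Finset.sum_congr rfl fun j hj => ?_
  rw [besselCoeff_eq (Nat.lt_succ_iff.mp (Finset.mem_range.mp hj))]

theorem besselCoeff_add_two (k i : ℕ) :
    besselCoeff (k + 2) (i + 2) =
      besselCoeff (k + 1) (i + 2) + besselCoeff k i / ((2 * k + 3) * (2 * k + 1)) := by
  rcases lt_or_ge k i with hki | hik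
  · rw [besselCoeff_of_lt hki, besselCoeff_of_lt (by omega), besselCoeff_of_lt (by omega),
      zero_div, add_zero]
  have hk2 : ((k + 2).descFactorial (i + 2) : ℝ) = (k + 2) * (k + 1) * k.descFactorial i := by
    rw [Nat.succ_descFactorial_succ, Nat.succ_descFactorial_succ]; push_cast; ring
  have hk1 : ((k + 1).descFactorial (i + 2) : ℝ) = (k + 1) * (k - i) * k.descFactorial i := by
    rw [Nat.succ_descFactorial_succ, Nat.descFactorial_succ]; push_cast [hik]; ring
  have h2k : ((2 * k + 2) * (2 * k + 1) * (2 * k).descFactorial i : ℝ) =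
      (2 * k + 2 - i) * (2 * k + 1 - i) * (2 * k + 2).descFactorial i := by
    have htop : (2 * k + 2).descFactorial (i + 2) =
        (2 * k + 2) * ((2 * k + 1) * (2 * k).descFactorial i) := by
      rw [Nat.succ_descFactorial_succ, Nat.succ_descFactorial_succ]
    have hbot : (2 * k + 2).descFactorial (i + 2) =
        (2 * k + 2 - (i + 1)) * ((2 * k + 2 - i) * (2 * k + 2).descFactorial i) := by
      rw [Nat.descFactorial_succ, Nat.descFactorial_succ]
    have := congrArg (Nat.cast (R := ℝ)) (htop.symm.trans hbot)
    push_cast [show i ≤ 2 * k + 2 by omega, show i ≤ 2 * k + 1 by omega] at this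
    linear_combination this
  have h2k2 : ((2 * (k + 1)).descFactorial (i + 2) : ℝ) =
      (2 * k + 2) * (2 * k + 1) * (2 * k).descFactorial i := by
    rw [show 2 * (k + 1) = 2 * k + 1 + 1 by ring, Nat.succ_descFactorial_succ,
      Nat.succ_descFactorial_succ]; push_cast; ring
  have h2k4 : ((2 * (k + 2)).descFactorial (i + 2) : ℝ) =
      (2 * k + 4) * (2 * k + 3) * (2 * k + 2).descFactorial i := by
    rw [show 2 * (k + 2) = 2 * k + 3 + 1 by ring, Nat.succ_descFactorial_succ,
      Nat.succ_descFactorial_succ]; push_cast; ring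
  have hfac : ((i + 2)! : ℝ) = (i + 2) * (i + 1) * i ! := by
    push_cast [Nat.factorial_succ]; ring
  have hD : ((2 * k).descFactorial i : ℝ) ≠ 0 := by
    exact_mod_cast (Nat.descFactorial_pos.mpr (by omega)).ne'
  have hD' : ((2 * k + 2).descFactorial i : ℝ) ≠ 0 := by
    exact_mod_cast (Nat.descFactorial_pos.mpr (by omega)).ne'
  simp only [besselCoeff]
  rw [hk2, hk1, h2k2, h2k4, hfac]
  field_simp
  linear_combination (2 ^ (i + 2) * (k + 2) * (k.descFactorial i : ℝ)) * h2k

theorem besselPoly_zero : besselPoly 0 = 1 := by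
  simp [besselPoly, besselCoeff_zero_right]

theorem besselPoly_one : besselPoly 1 = 1 + X := by
  simp [besselPoly, Finset.sum_range_succ, besselCoeff_zero_right, besselCoeff_one_right]

theorem besselPoly_add_two (k : ℕ) :
    besselPoly (k + 2) =
      besselPoly (k + 1) + C ((2 * k + 3) * (2 * k + 1) : ℝ)⁻¹ * (X ^ 2 * besselPoly k) := by
  ext j
  rw [coeff_add, coeff_C_mul, coeff_X_pow_mul', coeff_besselPoly, coeff_besselPoly]
  match j with
  | 0 => simp [besselCoeff_zero_right]
  | 1 => simp [besselCoeff_one_right]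
  | i + 2 => rw [if_pos (by omega), Nat.add_sub_cancel, coeff_besselPoly, besselCoeff_add_two,
      inv_mul_eq_div]

noncomputable def expNeg : PowerSeries ℝ := PowerSeries.rescale (-1) (PowerSeries.exp ℝ)

theorem coeff_expNeg (s : ℕ) : PowerSeries.coeff s expNeg = (-1) ^ s / s ! := by
  simp [expNeg, PowerSeries.coeff_rescale, PowerSeries.coeff_exp, div_eq_mul_inv]

theorem rescale_expNeg_mul_rescale_expNeg (a b : ℝ) :
    PowerSeries.rescale a expNeg * PowerSeries.rescale b expNeg =
      PowerSeries.rescale (a + b) expNeg := by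
  simp only [expNeg, PowerSeries.rescale_rescale, PowerSeries.exp_mul_exp_eq_exp_add, mul_add]

noncomputable def expNegBesselCoeff (k s : ℕ) : ℝ :=
  (-1) ^ (s + k) * (∏ i ∈ Finset.range k, ((s : ℝ) - (2 * i + 1))) /
    ((∏ i ∈ Finset.range k, (2 * (i : ℝ) + 1)) * s !)

theorem expNegBesselCoeff_zero_right (k : ℕ) : expNegBesselCoeff k 0 = 1 := by
  have hprod : ∏ i ∈ Finset.range k, ((0 : ℝ) - (2 * i + 1)) =
      (-1) ^ k * ∏ i ∈ Finset.range k, (2 * (i : ℝ) + 1) := by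
    simp only [zero_sub, Finset.prod_neg, Finset.card_range]
  have hpos : 0 < ∏ i ∈ Finset.range k, (2 * (i : ℝ) + 1) :=
    Finset.prod_pos fun i _ => by positivity
  rw [expNegBesselCoeff, Nat.cast_zero, hprod, Nat.factorial_zero, Nat.cast_one]
  field_simp
  rw [zero_add, ← pow_add, ← two_mul, pow_mul, neg_one_sq, one_pow]

theorem expNegBesselCoeff_one_right (k : ℕ) : expNegBesselCoeff (k + 1) 1 = 0 := by
  rw [expNegBesselCoeff, Finset.prod_range_succ', Nat.cast_one]
  simp

theorem expNegBesselCoeff_add_two (k t : ℕ) :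
    expNegBesselCoeff (k + 2) (t + 2) =
      expNegBesselCoeff (k + 1) (t + 2) + expNegBesselCoeff k t / ((2 * k + 3) * (2 * k + 1)) := by
  have hnum₁ : ∏ i ∈ Finset.range (k + 1), (((t + 2 : ℕ) : ℝ) - (2 * i + 1)) =
      (∏ i ∈ Finset.range k, ((t : ℝ) - (2 * i + 1))) * (t + 1) := by
    rw [Finset.prod_range_succ']
    push_cast
    congr 1
    · exact Finset.prod_congr rfl fun i _ => by ring
    · ring
  have hnum₂ : ∏ i ∈ Finset.range (k + 2), (((t + 2 : ℕ) : ℝ) - (2 * i + 1)) =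
      (∏ i ∈ Finset.range k, ((t : ℝ) - (2 * i + 1))) * (t + 1) * (t - (2 * k + 1)) := by
    rw [Finset.prod_range_succ, hnum₁]
    push_cast
    ring
  have hpos : 0 < ∏ i ∈ Finset.range k, (2 * (i : ℝ) + 1) :=
    Finset.prod_pos fun i _ => by positivity
  simp only [expNegBesselCoeff]
  rw [hnum₁, hnum₂, Finset.prod_range_succ, Finset.prod_range_succ]
  push_cast [Nat.factorial_succ]
  field_simp
  ring

theorem expNeg_mul_besselPoly (k : ℕ) :
    expNeg * (besselPoly k : PowerSeries ℝ) = PowerSeries.mk (expNegBesselCoeff k) := by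
  induction k using Nat.twoStepInduction with
  | zero =>
    ext s
    simp [besselPoly_zero, coeff_expNeg, expNegBesselCoeff]
  | one =>
    ext s
    rw [besselPoly_one, Polynomial.coe_add, Polynomial.coe_one, Polynomial.coe_X, mul_add, mul_one,
      map_add, PowerSeries.coeff_mk]
    rcases s with _ | t
    · simp [coeff_expNeg, expNegBesselCoeff_zero_right]
    · rw [PowerSeries.coeff_succ_mul_X, coeff_expNeg, coeff_expNeg, expNegBesselCoeff,
        Finset.prod_range_one, Finset.prod_range_one]
      push_cast [Nat.factorial_succ]
      field_simp
      ring
  | more k ih₀ ih₁ =>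
    have hrec : expNeg * (besselPoly (k + 2) : PowerSeries ℝ) =
        expNeg * (besselPoly (k + 1) : PowerSeries ℝ) +
          PowerSeries.C ((2 * k + 3) * (2 * k + 1) : ℝ)⁻¹ * PowerSeries.X ^ 2 *
            (expNeg * (besselPoly k : PowerSeries ℝ)) := by
      rw [besselPoly_add_two, Polynomial.coe_add, Polynomial.coe_mul, Polynomial.coe_mul,
        Polynomial.coe_C, Polynomial.coe_pow, Polynomial.coe_X]
      ring
    rw [hrec, ih₀, ih₁]
    ext s
    rw [map_add, mul_assoc, PowerSeries.coeff_C_mul, PowerSeries.coeff_X_pow_mul',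
      PowerSeries.coeff_mk, PowerSeries.coeff_mk]
    match s with
    | 0 => simp [expNegBesselCoeff_zero_right]
    | 1 => simp [expNegBesselCoeff_one_right]
    | t + 2 =>
      rw [if_pos (by omega), Nat.add_sub_cancel, PowerSeries.coeff_mk, expNegBesselCoeff_add_two,
        inv_mul_eq_div]

theorem expNegBesselCoeff_odd_of_lt {k j : ℕ} (h : j < k) :
    expNegBesselCoeff k (2 * j + 1) = 0 := by
  rw [expNegBesselCoeff, Finset.prod_eq_zero (Finset.mem_range.mpr h) (by push_cast; ring),
    mul_zero, zero_div]

theorem expNegBesselCoeff_odd_self_ne_zero (j : ℕ) : expNegBesselCoeff j (2 * j + 1) ≠ 0 := by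
  have hnum : ∏ i ∈ Finset.range j, (((2 * j + 1 : ℕ) : ℝ) - (2 * i + 1)) ≠ 0 :=
    Finset.prod_ne_zero_iff.mpr fun i hi => by
      have : (i : ℝ) < j := by exact_mod_cast Finset.mem_range.mp hi
      push_cast
      linarith
  have hden : ∏ i ∈ Finset.range j, (2 * (i : ℝ) + 1) ≠ 0 :=
    Finset.prod_ne_zero_iff.mpr fun i _ => by positivity
  rw [expNegBesselCoeff]
  exact div_ne_zero (mul_ne_zero (pow_ne_zero _ (by norm_num)) hnum)
    (mul_ne_zero hden (by positivity))

theorem coeff_expNeg_mul_sum_besselPoly (N : ℕ) (β : ℕ → ℝ) (s : ℕ) :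
    PowerSeries.coeff s
        (expNeg * ((∑ i ∈ Finset.range N, C (β i) * besselPoly i : ℝ[X]) : PowerSeries ℝ)) =
      ∑ i ∈ Finset.range N, β i * expNegBesselCoeff i s := by
  rw [← coeToPowerSeries.ringHom_apply, map_sum, Finset.mul_sum, map_sum]
  refine Finset.sum_congr rfl fun i _ => ?_
  rw [coeToPowerSeries.ringHom_apply, Polynomial.coe_mul, Polynomial.coe_C, mul_left_comm,
    PowerSeries.coeff_C_mul, expNeg_mul_besselPoly, PowerSeries.coeff_mk]

theorem coeff_odd_rescale_expNeg_mul_besselPoly_comp (a b : ℝ) {n m j : ℕ} (hj : j < min n m) :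
    PowerSeries.coeff (2 * j + 1) (PowerSeries.rescale (a + b) expNeg *
      (((besselPoly n).comp (C a * X) * (besselPoly m).comp (C b * X) : ℝ[X]) :
        PowerSeries ℝ)) = 0 := by
  have hsplit : PowerSeries.rescale (a + b) expNeg *
      (((besselPoly n).comp (C a * X) * (besselPoly m).comp (C b * X) : ℝ[X]) : PowerSeries ℝ) =
      PowerSeries.rescale a (expNeg * besselPoly n) *
        PowerSeries.rescale b (expNeg * besselPoly m) := by
    rw [← rescale_expNeg_mul_rescale_expNeg, Polynomial.coe_mul, coe_comp_C_mul_X,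
      coe_comp_C_mul_X, map_mul, map_mul]
    ring
  rw [hsplit]
  refine PowerSeries.coeff_odd_mul_eq_zero (fun i hi => ?_) (fun i hi => ?_) hj <;>
    rw [PowerSeries.coeff_rescale, expNeg_mul_besselPoly, PowerSeries.coeff_mk,
      expNegBesselCoeff_odd_of_lt hi, mul_zero]

theorem bessel_linearization_vanishing
    (n m : ℕ) (a : ℝ) (β : ℕ → ℝ)
    (hβ : ∀ u : ℝ, besselQ n (a * u) * besselQ m ((1 - a) * u) =
      ∑ k ∈ Finset.range (n + m + 1), β k * besselQ k u)
    (k : ℕ) (hk : k < min n m) :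
    β k = 0 := by
  have hpoly : (besselPoly n).comp (C a * X) * (besselPoly m).comp (C (1 - a) * X) =
      ∑ i ∈ Finset.range (n + m + 1), C (β i) * besselPoly i :=
    Polynomial.funext fun u => by simpa [eval_finsetSum, eval_besselPoly] using hβ u
  refine eq_zero_of_sum_mul_triangular (fun i j => expNegBesselCoeff i (2 * j + 1)) β
    (M := min n m) (N := n + m + 1) (by omega) (fun _ _ => expNegBesselCoeff_odd_of_lt)
    (fun j _ => expNegBesselCoeff_odd_self_ne_zero j) (fun j hj => ?_) k hk
  rw [← coeff_expNeg_mul_sum_besselPoly, ← hpoly]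
  simpa [PowerSeries.rescale_one] using coeff_odd_rescale_expNeg_mul_besselPoly_comp a (1 - a) hj
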